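/- arXiv:1602.03473 — 3 statements merged into one kernel-verified Lean document; each statement's English description precedes it below -/
import Mathlib

section
/- For finite sets A₁,…,Aₙ ⊂ ℝ, the fourth root of the additive energy is subadditive under union: (E⁺(⋃ᵢ Aᵢ))^{1/4} ≤ Σᵢ (E⁺(Aᵢ))^{1/4}. -/
open Finset
noncomputable section

def mulE (A B : Finset ℝ) : ℕ :=
  ((A ×ˢ B ×ˢ A ×ˢ B).filter fun q => q.1 * q.2.1 = q.2.2.1 * q.2.2.2).card

def addE (A B : Finset ℝ) : ℕ :=
  ((A ×ˢ B ×ˢ A ×ˢ B).filter fun q => q.1 + q.2.1 = q.2.2.1 + q.2.2.2).card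

def quot (A B : Finset ℝ) : Finset ℝ := (A ×ˢ B).image fun p => p.1 / p.2

def prodSet (A B : Finset ℝ) : Finset ℝ := (A ×ˢ B).image fun p => p.1 * p.2

def dil (l : ℝ) (A : Finset ℝ) : Finset ℝ := A.image fun a => l * a

/-- `x • R⁻¹ = {x / r : r ∈ R}` -/
def dilInv (x : ℝ) (R : Finset ℝ) : Finset ℝ := R.image fun r => x / r

/-- `x ∈ Sym^×_t(Q,R)` iff `|Q ∩ x R⁻¹| ≥ t`. -/
def symCond (t : ℝ) (Q R : Finset ℝ) (x : ℝ) : Prop :=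
  t ≤ ((Q ∩ dilInv x R).card : ℝ)

/-!
Write `r(a)` for the number of representations `a = x + y` with `x, y ∈ ⋃ Aᵢ`, so that
`E⁺(⋃ Aᵢ) = ‖r‖₂²`. Pointwise `r ≤ ∑_{i,j} r_{Aᵢ,Aⱼ}`, so Minkowski's inequality gives
`E⁺(⋃ Aᵢ)^{1/2} ≤ ∑_{i,j} E⁺(Aᵢ, Aⱼ)^{1/2}`. Counting solutions of `a - c = d - b` instead
shows `E⁺(A, B) = ∑_d r_{A-A}(d) r_{B-B}(d)`, so by Cauchy–Schwarz
`E⁺(A, B)^2 ≤ E⁺(A) E⁺(B)`, and the double sum is at most `(∑ᵢ E⁺(Aᵢ)^{1/4})^2`.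
-/

open scoped Combinatorics.Additive Pointwise

lemma Real.sqrt_sum_sq_sum_le {ι κ : Type*} (I : Finset ι) (K : Finset κ) (f : ι → κ → ℝ) :
    √(∑ k ∈ K, (∑ i ∈ I, f i k) ^ 2) ≤ ∑ i ∈ I, √(∑ k ∈ K, f i k ^ 2) := by
  simpa [EuclideanSpace.norm_eq, ← Finset.sum_coe_sort K] using
    norm_sum_le I fun i => (WithLp.toLp 2 fun k : K => f i k : EuclideanSpace ℝ K)

namespace Finset

variable {ι α : Type*} [AddCommGroup α] [DecidableEq α]

def addRepr (s t : Finset α) (a : α) : ℕ := #{xy ∈ s ×ˢ t | xy.1 + xy.2 = a}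

def subRepr (s : Finset α) (d : α) : ℕ := #{xy ∈ s ×ˢ s | xy.1 - xy.2 = d}

lemma addRepr_eq_zero {s t : Finset α} {a : α} (h : a ∉ s + t) : addRepr s t a = 0 := by
  rw [addRepr, card_eq_zero, filter_eq_empty_iff]
  rintro ⟨x, y⟩ hxy rfl
  rw [mem_product] at hxy
  exact h (add_mem_add hxy.1 hxy.2)

lemma subRepr_eq_zero {s : Finset α} {d : α} (h : d ∉ s - s) : subRepr s d = 0 := by
  rw [subRepr, card_eq_zero, filter_eq_empty_iff]
  rintro ⟨x, y⟩ hxy rfl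
  rw [mem_product] at hxy
  exact h (sub_mem_sub hxy.1 hxy.2)

lemma addEnergy_eq_sum_addRepr_sq {s t u : Finset α} (h : s + t ⊆ u) :
    E[s, t] = ∑ a ∈ u, addRepr s t a ^ 2 := by
  rw [addEnergy_eq_sum_sq']
  exact sum_subset h fun a _ ha =>
    (by rw [addRepr_eq_zero ha, zero_pow two_ne_zero] : addRepr s t a ^ 2 = 0)

lemma addEnergy_eq_sum_subRepr_mul {s t u : Finset α} (h : s - s ⊆ u) :
    E[s, t] = ∑ d ∈ u, subRepr s d * subRepr t d := by
  rw [addEnergy_eq_card_filter, card_eq_sum_card_fiberwise (f := fun x => x.1.1 - x.2.1)]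
  · refine sum_congr rfl fun d _ => ?_
    rw [subRepr, subRepr, ← card_product, filter_filter]
    refine card_nbij' (fun x => ((x.1.1, x.2.1), (x.2.2, x.1.2)))
      (fun y => ((y.1.1, y.2.2), (y.1.2, y.2.1))) ?_ ?_ (fun _ _ => rfl) (fun _ _ => rfl)
    · rintro ⟨⟨a, b⟩, c, e⟩
      simp only [mem_coe, mem_filter, mem_product]
      rintro ⟨⟨⟨ha, hb⟩, hc, he⟩, hsum, rfl⟩
      exact ⟨⟨⟨ha, hc⟩, rfl⟩, ⟨he, hb⟩, by rw [sub_eq_sub_iff_add_eq_add, hsum, add_comm]⟩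
    · rintro ⟨⟨a, c⟩, e, b⟩
      simp only [mem_coe, mem_filter, mem_product]
      rintro ⟨⟨⟨ha, hc⟩, rfl⟩, ⟨he, hb⟩, hd⟩
      exact ⟨⟨⟨ha, hb⟩, hc, he⟩, by rwa [eq_comm, sub_eq_sub_iff_add_eq_add, add_comm e] at hd, rfl⟩
  · simp only [Set.MapsTo, mem_coe, mem_filter, mem_product]
    rintro x ⟨⟨⟨ha, -⟩, hc, -⟩, -⟩
    exact h (sub_mem_sub ha hc)

lemma addEnergy_sq_le_mul (s t : Finset α) : E[s, t] ^ 2 ≤ E[s] * E[t] := by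
  have hs : s - s ⊆ (s - s) ∪ (t - t) := subset_union_left
  have ht : t - t ⊆ (s - s) ∪ (t - t) := subset_union_right
  simpa only [addEnergy_eq_sum_subRepr_mul hs, addEnergy_eq_sum_subRepr_mul ht, sq] using
    sum_mul_sq_le_sq_mul_sq _ (subRepr s) (subRepr t)

lemma addRepr_biUnion_le (I J : Finset ι) (A B : ι → Finset α) (a : α) :
    addRepr (I.biUnion A) (J.biUnion B) a ≤ ∑ p ∈ I ×ˢ J, addRepr (A p.1) (B p.2) a := by
  refine (card_le_card ?_).trans card_biUnion_le
  rintro ⟨x, y⟩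
  simp only [mem_filter, mem_product, mem_biUnion]
  rintro ⟨⟨⟨i, hi, hx⟩, ⟨j, hj, hy⟩⟩, rfl⟩
  exact ⟨(i, j), ⟨hi, hj⟩, ⟨hx, hy⟩, rfl⟩

lemma sqrt_addEnergy_biUnion_le (I J : Finset ι) (A B : ι → Finset α) :
    √(E[I.biUnion A, J.biUnion B] : ℝ) ≤ ∑ p ∈ I ×ˢ J, √(E[A p.1, B p.2] : ℝ) := by
  set u := I.biUnion A + J.biUnion B
  have hu : ∀ p ∈ I ×ˢ J, A p.1 + B p.2 ⊆ u := fun p hp => by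
    rw [mem_product] at hp
    exact add_subset_add (subset_biUnion_of_mem A hp.1) (subset_biUnion_of_mem B hp.2)
  calc √(E[I.biUnion A, J.biUnion B] : ℝ)
      ≤ √(∑ a ∈ u, (∑ p ∈ I ×ˢ J, (addRepr (A p.1) (B p.2) a : ℝ)) ^ 2) := by
        rw [addEnergy_eq_sum_addRepr_sq subset_rfl]
        push_cast
        gcongr with a
        exact_mod_cast addRepr_biUnion_le I J A B a
    _ ≤ ∑ p ∈ I ×ˢ J, √(∑ a ∈ u, (addRepr (A p.1) (B p.2) a : ℝ) ^ 2) :=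
        Real.sqrt_sum_sq_sum_le _ _ _
    _ = ∑ p ∈ I ×ˢ J, √(E[A p.1, B p.2] : ℝ) := sum_congr rfl fun p hp => by
        rw [addEnergy_eq_sum_addRepr_sq (hu p hp)]
        push_cast
        rfl

lemma sqrt_addEnergy_le (s t : Finset α) :
    √(E[s, t] : ℝ) ≤ (E[s] : ℝ) ^ (1 / 4 : ℝ) * (E[t] : ℝ) ^ (1 / 4 : ℝ) :=
  calc √(E[s, t] : ℝ) = ((E[s, t] : ℝ) ^ 2) ^ (1 / 4 : ℝ) := by
        rw [Real.sqrt_eq_rpow, ← Real.rpow_natCast, ← Real.rpow_mul (by positivity)]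
        norm_num
    _ ≤ ((E[s] : ℝ) * E[t]) ^ (1 / 4 : ℝ) := by
        gcongr
        exact_mod_cast addEnergy_sq_le_mul s t
    _ = (E[s] : ℝ) ^ (1 / 4 : ℝ) * (E[t] : ℝ) ^ (1 / 4 : ℝ) :=
        Real.mul_rpow (by positivity) (by positivity)

theorem addEnergy_biUnion_rpow_le (I : Finset ι) (A : ι → Finset α) :
    (E[I.biUnion A] : ℝ) ^ (1 / 4 : ℝ) ≤ ∑ i ∈ I, (E[A i] : ℝ) ^ (1 / 4 : ℝ) := by
  set S := ∑ i ∈ I, (E[A i] : ℝ) ^ (1 / 4 : ℝ)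
  have hS : 0 ≤ S := sum_nonneg fun i _ => by positivity
  have key : √(E[I.biUnion A] : ℝ) ≤ S ^ 2 :=
    calc √(E[I.biUnion A] : ℝ) ≤ ∑ p ∈ I ×ˢ I, √(E[A p.1, A p.2] : ℝ) :=
          sqrt_addEnergy_biUnion_le I I A A
      _ ≤ ∑ p ∈ I ×ˢ I, (E[A p.1] : ℝ) ^ (1 / 4 : ℝ) * (E[A p.2] : ℝ) ^ (1 / 4 : ℝ) :=
          sum_le_sum fun p _ => sqrt_addEnergy_le _ _
      _ = S ^ 2 := by rw [sq, sum_mul_sum, sum_product]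
  calc (E[I.biUnion A] : ℝ) ^ (1 / 4 : ℝ) = √(√(E[I.biUnion A] : ℝ)) := by
        rw [Real.sqrt_eq_rpow, Real.sqrt_eq_rpow, ← Real.rpow_mul (by positivity)]
        norm_num
    _ ≤ √(S ^ 2) := Real.sqrt_le_sqrt key
    _ = S := Real.sqrt_sq hS

end Finset

lemma addE_eq_addEnergy (A B : Finset ℝ) : addE A B = E[A, B] := by
  rw [addEnergy_eq_card_filter, addE]
  refine card_equiv (Equiv.prodAssoc ℝ ℝ (ℝ × ℝ)).symm ?_
  rintro ⟨a, b, c, d⟩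
  simp [and_assoc]

theorem stmt4 (n : ℕ) (A : Fin n → Finset ℝ) :
    ((addE (Finset.univ.biUnion A) (Finset.univ.biUnion A) : ℝ)) ^ ((1:ℝ)/4) ≤
      ∑ i : Fin n, ((addE (A i) (A i) : ℝ)) ^ ((1:ℝ)/4) := by
  simpa only [addE_eq_addEnergy] using addEnergy_biUnion_rpow_le Finset.univ A
end
end

section
/- For finite sets A₁,…,Aₙ ⊂ ℝ \ {0}, the fourth root of the multiplicative energy is subadditive under union: (E^×(⋃ᵢ Aᵢ))^{1/4} ≤ Σᵢ (E^×(Aᵢ))^{1/4}. -/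
open Finset
noncomputable section

/-!
Write `E(A,B,C,D)` for the number of solutions of `ab = cd` with `a ∈ A`, `b ∈ B`, `c ∈ C`,
`d ∈ D`, so that `E(A,B) = E(A,B,A,B)`, and put `E(A) = E(A,A)`. Splitting the union
`X = ⋃ Aᵢ` gives `E(X) ≤ ∑_{i,j,k,l} E(Aᵢ,Aⱼ,Aₖ,Aₗ)`. Cauchy–Schwarz on the numbers of
representations of a product gives `E(A,B,C,D)² ≤ E(A,B) E(C,D)`; since for nonzero `b, c`
the equation `ab = cd` says `a/c = d/b`, Cauchy–Schwarz on the numbers of representations of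
a ratio gives `E(A,B)² ≤ E(A) E(B)`. Hence `E(Aᵢ,Aⱼ,Aₖ,Aₗ) ≤ eᵢ eⱼ eₖ eₗ` with
`eᵢ = E(Aᵢ)^{1/4}`, and summing over `i, j, k, l` gives `E(X) ≤ (∑ eᵢ)⁴`.
-/

namespace Finset

variable {ι κ γ : Type*} [DecidableEq γ]

theorem card_filter_product_eq_eq_sum_mul {f : ι → γ} {s : Finset ι} {u : Finset γ}
    (hs : (s : Set ι).MapsTo f u) (t : Finset κ) (g : κ → γ) :
    #{x ∈ s ×ˢ t | f x.1 = g x.2} = ∑ y ∈ u, #{a ∈ s | f a = y} * #{b ∈ t | g b = y} := by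
  rw [card_eq_sum_card_fiberwise (f := fun x => f x.1) (t := u)
    fun x hx => hs (mem_product.mp (mem_filter.mp hx).1).1]
  refine sum_congr rfl fun y _ => ?_
  rw [← card_product, filter_filter]
  congr 1
  ext x
  simp only [mem_filter, mem_product]
  grind

theorem card_filter_product_eq_sq_le (s : Finset ι) (t : Finset κ) (f : ι → γ) (g : κ → γ) :
    #{x ∈ s ×ˢ t | f x.1 = g x.2} ^ 2 ≤
      #{x ∈ s ×ˢ s | f x.1 = f x.2} * #{x ∈ t ×ˢ t | g x.1 = g x.2} := by
  set u := s.image f ∪ t.image g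
  have hs : (s : Set ι).MapsTo f u := fun a ha => mem_union_left _ (mem_image_of_mem f ha)
  have ht : (t : Set κ).MapsTo g u := fun b hb => mem_union_right _ (mem_image_of_mem g hb)
  simp only [card_filter_product_eq_eq_sum_mul hs, card_filter_product_eq_eq_sum_mul ht, ← sq]
  exact sum_mul_sq_le_sq_mul_sq _ _ _

theorem biUnion_product_biUnion {α β : Type*} [DecidableEq α] [DecidableEq β]
    (I : Finset ι) (J : Finset κ) (s : ι → Finset α) (t : κ → Finset β) :
    I.biUnion s ×ˢ J.biUnion t = (I ×ˢ J).biUnion fun p => s p.1 ×ˢ t p.2 := by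
  ext
  simp only [mem_product, mem_biUnion, Prod.exists]
  grind

theorem sum_product_mul_eq_sq {R : Type*} [CommSemiring R] (s : Finset ι) (f : ι → R) :
    ∑ p ∈ s ×ˢ s, f p.1 * f p.2 = (∑ i ∈ s, f i) ^ 2 := by
  rw [sq, sum_mul_sum, sum_product]

end Finset

theorem mulE_eq_card_filter_mul (A B : Finset ℝ) :
    mulE A B = #{x ∈ (A ×ˢ B) ×ˢ (A ×ˢ B) | x.1.1 * x.1.2 = x.2.1 * x.2.2} :=
  card_equiv (Equiv.prodAssoc ℝ ℝ (ℝ × ℝ)).symm fun _ => by simp [and_assoc]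

theorem mulE_eq_card_filter_div {A B : Finset ℝ} (hA : (0:ℝ) ∉ A) (hB : (0:ℝ) ∉ B) :
    mulE A B = #{x ∈ (A ×ˢ A) ×ˢ (B ×ˢ B) | x.1.1 / x.1.2 = x.2.1 / x.2.2} := by
  refine card_nbij' (fun q => ((q.1, q.2.2.1), (q.2.2.2, q.2.1)))
    (fun x => (x.1.1, x.2.2, x.1.2, x.2.1)) ?_ ?_ (fun _ _ => rfl) (fun _ _ => rfl)
  · rintro ⟨a, b, c, d⟩ hq
    simp only [coe_filter, mem_product, Set.mem_ofPred_eq] at hq ⊢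
    obtain ⟨⟨ha, hb, hc, hd⟩, hab⟩ := hq
    refine ⟨⟨⟨ha, hc⟩, hd, hb⟩, ?_⟩
    rw [div_eq_div_iff (ne_of_mem_of_not_mem hc hA) (ne_of_mem_of_not_mem hb hB)]
    linarith
  · rintro ⟨⟨a, c⟩, d, b⟩ hx
    simp only [coe_filter, mem_product, Set.mem_ofPred_eq] at hx ⊢
    obtain ⟨⟨⟨ha, hc⟩, hd, hb⟩, hac⟩ := hx
    refine ⟨⟨ha, hb, hc, hd⟩, ?_⟩
    rw [div_eq_div_iff (ne_of_mem_of_not_mem hc hA) (ne_of_mem_of_not_mem hb hB)] at hac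
    linarith

theorem mulE_sq_le {A B : Finset ℝ} (hA : (0:ℝ) ∉ A) (hB : (0:ℝ) ∉ B) :
    mulE A B ^ 2 ≤ mulE A A * mulE B B := by
  rw [mulE_eq_card_filter_div hA hB, mulE_eq_card_filter_div hA hA,
    mulE_eq_card_filter_div hB hB]
  exact card_filter_product_eq_sq_le (A ×ˢ A) (B ×ˢ B) (fun p : ℝ × ℝ => p.1 / p.2)
    fun p => p.1 / p.2

def mulE4 (A B C D : Finset ℝ) : ℕ :=
  #{x ∈ (A ×ˢ B) ×ˢ (C ×ˢ D) | x.1.1 * x.1.2 = x.2.1 * x.2.2}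

theorem mulE4_sq_le (A B C D : Finset ℝ) : mulE4 A B C D ^ 2 ≤ mulE A B * mulE C D := by
  rw [mulE_eq_card_filter_mul, mulE_eq_card_filter_mul]
  exact card_filter_product_eq_sq_le (A ×ˢ B) (C ×ˢ D) (fun p : ℝ × ℝ => p.1 * p.2)
    fun p => p.1 * p.2

theorem mulE4_pow_four_le {A B C D : Finset ℝ} (hA : (0:ℝ) ∉ A) (hB : (0:ℝ) ∉ B)
    (hC : (0:ℝ) ∉ C) (hD : (0:ℝ) ∉ D) :
    mulE4 A B C D ^ 4 ≤ mulE A A * mulE B B * (mulE C C * mulE D D) :=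
  calc mulE4 A B C D ^ 4 = (mulE4 A B C D ^ 2) ^ 2 := by ring
    _ ≤ (mulE A B * mulE C D) ^ 2 := Nat.pow_le_pow_left (mulE4_sq_le A B C D) 2
    _ = mulE A B ^ 2 * mulE C D ^ 2 := mul_pow _ _ _
    _ ≤ _ := Nat.mul_le_mul (mulE_sq_le hA hB) (mulE_sq_le hC hD)

theorem mulE_biUnion_le {ι : Type*} (I : Finset ι) (A : ι → Finset ℝ) :
    mulE (I.biUnion A) (I.biUnion A) ≤
      ∑ p ∈ (I ×ˢ I) ×ˢ (I ×ˢ I), mulE4 (A p.1.1) (A p.1.2) (A p.2.1) (A p.2.2) := by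
  rw [mulE_eq_card_filter_mul, biUnion_product_biUnion, biUnion_product_biUnion, filter_biUnion]
  exact card_biUnion_le

theorem rpow_one_div_four_pow {x : ℝ} (hx : 0 ≤ x) : (x ^ ((1:ℝ)/4)) ^ 4 = x := by
  rw [← Real.rpow_natCast, ← Real.rpow_mul hx]
  norm_num

theorem mulE4_le_rpow {A B C D : Finset ℝ} (hA : (0:ℝ) ∉ A) (hB : (0:ℝ) ∉ B)
    (hC : (0:ℝ) ∉ C) (hD : (0:ℝ) ∉ D) :
    (mulE4 A B C D : ℝ) ≤
      (mulE A A : ℝ) ^ ((1:ℝ)/4) * (mulE B B : ℝ) ^ ((1:ℝ)/4) *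
        ((mulE C C : ℝ) ^ ((1:ℝ)/4) * (mulE D D : ℝ) ^ ((1:ℝ)/4)) := by
  rw [← pow_le_pow_iff_left₀ (by positivity) (by positivity) four_ne_zero]
  simp only [mul_pow, rpow_one_div_four_pow (Nat.cast_nonneg _)]
  exact_mod_cast mulE4_pow_four_le hA hB hC hD

theorem stmt5 (n : ℕ) (A : Fin n → Finset ℝ) (h : ∀ i, (0:ℝ) ∉ A i) :
    ((mulE (Finset.univ.biUnion A) (Finset.univ.biUnion A) : ℝ)) ^ ((1:ℝ)/4) ≤
      ∑ i : Fin n, ((mulE (A i) (A i) : ℝ)) ^ ((1:ℝ)/4) := by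
  set e : Fin n → ℝ := fun i => (mulE (A i) (A i) : ℝ) ^ ((1:ℝ)/4)
  have hE : (mulE (univ.biUnion A) (univ.biUnion A) : ℝ) ≤ (∑ i, e i) ^ 4 := calc
    _ ≤ ∑ p ∈ (univ ×ˢ univ) ×ˢ (univ ×ˢ univ),
        (mulE4 (A p.1.1) (A p.1.2) (A p.2.1) (A p.2.2) : ℝ) := mod_cast mulE_biUnion_le univ A
    _ ≤ ∑ p ∈ (univ ×ˢ univ) ×ˢ (univ ×ˢ univ), e p.1.1 * e p.1.2 * (e p.2.1 * e p.2.2) :=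
      sum_le_sum fun p _ => mulE4_le_rpow (h _) (h _) (h _) (h _)
    _ = (∑ i, e i) ^ 4 := by
      rw [sum_product_mul_eq_sq (f := fun p : Fin n × Fin n => e p.1 * e p.2),
        sum_product_mul_eq_sq, ← pow_mul]
  rw [← pow_le_pow_iff_left₀ (by positivity) (by positivity) four_ne_zero,
    rpow_one_div_four_pow (Nat.cast_nonneg _)]
  exact hE
end
end

section
/- Katz–Koester inclusion (mixed form): for a finite set A ⊂ ℝ \ {0} and any λ ∈ A/A, one has A_λ / A ⊆ (A/A) ∩ λ·(A/A)^{-1}. Consequently |(A/A) ∩ λ(A/A)^{-1}| ≥ |A_λ/A| ≥ |A|. -/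
open Finset
noncomputable section

theorem stmt9 (A : Finset ℝ) (h0 : (0:ℝ) ∉ A) (l : ℝ) (hl : l ∈ quot A A) :
    quot (A ∩ dil l A) A ⊆ (quot A A) ∩ dilInv l (quot A A) ∧
    A.card ≤ (quot (A ∩ dil l A) A).card ∧
    (quot (A ∩ dil l A) A).card ≤ ((quot A A) ∩ dilInv l (quot A A)).card := by
  have hsub : quot (A ∩ dil l A) A ⊆ (quot A A) ∩ dilInv l (quot A A) := by
    intro x hx
    simp only [quot, dil, dilInv, mem_image, mem_product, mem_inter, Prod.exists] at hx ⊢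
    obtain ⟨c, d, ⟨⟨hcA, e, heA, hce⟩, hdA⟩, hx⟩ := hx
    have hd0 : d ≠ 0 := fun h => h0 (h ▸ hdA)
    have he0 : e ≠ 0 := fun h => h0 (h ▸ heA)
    refine ⟨⟨c, d, ⟨hcA, hdA⟩, hx⟩, d / e, ⟨d, e, ⟨hdA, heA⟩, rfl⟩, ?_⟩
    subst hx
    field_simp
    linarith [hce]
  refine ⟨hsub, ?_, card_le_card hsub⟩
  simp only [quot, mem_image, mem_product, Prod.exists] at hl
  obtain ⟨a, b, ⟨haA, hbA⟩, hab⟩ := hl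
  have ha0 : a ≠ 0 := fun h => h0 (h ▸ haA)
  have hb0 : b ≠ 0 := fun h => h0 (h ▸ hbA)
  have haA' : a ∈ A ∩ dil l A := by
    simp only [mem_inter, dil, mem_image]
    exact ⟨haA, b, hbA, by rw [← hab]; field_simp⟩
  calc A.card = (A.image fun d => a / d).card := by
        refine (card_image_of_injOn ?_).symm
        intro x hx y hy hxy
        have hx0 : x ≠ 0 := fun h => h0 (h ▸ hx)
        have hy0 : y ≠ 0 := fun h => h0 (h ▸ hy)
        field_simp at hxy
        tauto
    _ ≤ (quot (A ∩ dil l A) A).card := by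
        apply card_le_card
        intro x hx
        simp only [mem_image] at hx
        obtain ⟨d, hdA, hx⟩ := hx
        simp only [quot, mem_image, mem_product, Prod.exists]
        exact ⟨a, d, ⟨haA', hdA⟩, hx⟩
end
end
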